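/- Let α ∈ ℝ with α ≠ 0 and α² ≠ 1. On the open set U = {(x,y,z,p,q) ∈ ℝ⁵ : y + α ≠ 0}, define the rolling Pfaffian system θ₁ = dy + y dz − (y² + 1)(dp − p dz) − exp(αx) dq, θ₂ = (1 − y²)(dp − p dz) + dy + y dz + dx, θ₃ = −2y(dp − p dz) + dz + α exp(αx) dq, and define the map Φ : U → ℝ⁵ by Φ(x,y,z,p,q) = (2·exp(z − αx), q + (2p − 1/α)·exp(−αx), exp(z)·(y + 1/α), exp(−z)·p, 1/(4·exp(2z − αx)·(y + α))). On ℝ⁵ with coordinates (X,Y,Z,P,Q), define the Monge normal form 1-forms ω₁ = dY − P dX, ω₂ = dP − Q dX, ω₃ = dZ − F dX, where F(X,Y,Z,P,Q) = Q·Z² + (1/(α² − 1))·(Q·Z² − Z/X + 1/(4·Q·X²)). Then for every a ∈ U and every v ∈ ℝ⁵: θ₁(a)(v) = 0 and θ₂(a)(v) = 0 and θ₃(a)(v) = 0 if and only if ω₁(Φ(a))((fderiv ℝ Φ a)(v)) = 0 and ω₂(Φ(a))((fderiv ℝ Φ a)(v)) = 0 and ω₃(Φ(a))((fderiv ℝ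 Φ a)(v)) = 0. (Theorem: the rolling Pfaffian system can be brought to the Monge normal form dz = q z² + (1/(α²−1))(√q z − 1/(2√q x))² by an explicit change of coordinates.) -/

import Mathlib

/-!
The map `Φ` pulls each Monge form back to a combination of the rolling forms: with
`u = exp (α x)` and `w = exp z`,
`Φ^*ω₁ = (θ₂ - θ₁) / u`, `Φ^*ω₂ = (α (θ₂ - θ₁) - θ₃) / (2 w (y + α))` and
`Φ^*ω₃ = w (α (1 - y²) θ₁ + (α y² + 2 y + α) θ₂ + (1 - y²) θ₃) / (2 (y + α))`.
The transition matrix has determinant `-1 / (2 u (y + α)) ≠ 0` on `U`, so at each point the two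
systems of linear forms have the same common kernel.
-/

noncomputable section

open Real

/-- coordinate differentials on ℝ⁵ -/
def dc (i : Fin 5) : (Fin 5 → ℝ) →L[ℝ] ℝ := ContinuousLinearMap.proj i

/-- θ₁ = dy + y dz − (y² + 1)(dp − p dz) − exp(αx) dq -/
def θ₁ (α : ℝ) : (Fin 5 → ℝ) → ((Fin 5 → ℝ) →L[ℝ] ℝ) :=
  fun a => dc 1 + a 1 • dc 2 - ((a 1)^2 + 1) • (dc 3 - a 3 • dc 2) - exp (α * a 0) • dc 4

/-- θ₂ = (1 − y²)(dp − p dz) + dy + y dz + dx -/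
def θ₂ : (Fin 5 → ℝ) → ((Fin 5 → ℝ) →L[ℝ] ℝ) :=
  fun a => (1 - (a 1)^2) • (dc 3 - a 3 • dc 2) + dc 1 + a 1 • dc 2 + dc 0

/-- θ₃ = −2y(dp − p dz) + dz + α exp(αx) dq -/
def θ₃ (α : ℝ) : (Fin 5 → ℝ) → ((Fin 5 → ℝ) →L[ℝ] ℝ) :=
  fun a => (-2 * a 1) • (dc 3 - a 3 • dc 2) + dc 2 + (α * exp (α * a 0)) • dc 4

/-- the change of coordinates Φ -/
def Φ (α : ℝ) : (Fin 5 → ℝ) → (Fin 5 → ℝ) :=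
  fun a => ![2 * exp (a 2 - α * a 0),
             a 4 + (2 * a 3 - 1/α) * exp (-(α * a 0)),
             exp (a 2) * (a 1 + 1/α),
             exp (-(a 2)) * a 3,
             1 / (4 * exp (2 * a 2 - α * a 0) * (a 1 + α))]

/-- F(X,Y,Z,P,Q) = QZ² + (1/(α²−1))(QZ² − Z/X + 1/(4QX²)) -/
def F (α : ℝ) (b : Fin 5 → ℝ) : ℝ :=
  b 4 * (b 2)^2 + (1/(α^2 - 1)) * (b 4 * (b 2)^2 - b 2 / b 0 + 1/(4 * b 4 * (b 0)^2))

/-- ω₁ = dY − P dX -/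
def ω₁ : (Fin 5 → ℝ) → ((Fin 5 → ℝ) →L[ℝ] ℝ) := fun b => dc 1 - b 3 • dc 0

/-- ω₂ = dP − Q dX -/
def ω₂ : (Fin 5 → ℝ) → ((Fin 5 → ℝ) →L[ℝ] ℝ) := fun b => dc 3 - b 4 • dc 0

/-- ω₃ = dZ − F dX -/
def ω₃ (α : ℝ) : (Fin 5 → ℝ) → ((Fin 5 → ℝ) →L[ℝ] ℝ) := fun b => dc 2 - F α b • dc 0

open scoped Matrix in
theorem Matrix.mulVec_eq_zero_iff_of_det_ne_zero {R n : Type*} [CommRing R] [NoZeroDivisors R]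
    [Fintype n] [DecidableEq n] {M : Matrix n n R} (hM : M.det ≠ 0) {x : n → R} :
    M *ᵥ x = 0 ↔ x = 0 :=
  ⟨Matrix.eq_zero_of_mulVec_eq_zero hM, fun hx => hx ▸ M.mulVec_zero⟩

theorem hasFDerivAt_Φ {α : ℝ} {a : Fin 5 → ℝ} (ha : a 1 + α ≠ 0) :
    HasFDerivAt (Φ α) (ContinuousLinearMap.pi ![
      (2 * exp (a 2 - α * a 0)) • (dc 2 - α • dc 0),
      dc 4 + exp (-(α * a 0)) • ((2 : ℝ) • dc 3 - (α * (2 * a 3 - 1 / α)) • dc 0),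
      exp (a 2) • ((a 1 + 1 / α) • dc 2 + dc 1),
      exp (-a 2) • (dc 3 - a 3 • dc 2),
      (-Φ α a 4) • ((a 1 + α)⁻¹ • dc 1 + (2 : ℝ) • dc 2 - α • dc 0)]) a := by
  refine hasFDerivAt_pi'.2 fun i => ?_
  have hd (j : Fin 5) : HasFDerivAt (fun x : Fin 5 → ℝ => x j) (dc j) a := hasFDerivAt_apply j a
  fin_cases i <;> simp only [Φ, Fin.reduceFinMk, Matrix.cons_val, ContinuousLinearMap.proj_pi]
  · refine (((hd 2).sub ((hd 0).const_mul α)).exp.const_mul 2).congr_fderiv ?_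
    ext v
    simp only [dc, ContinuousLinearMap.proj_apply, sub_apply, smul_apply, smul_eq_mul, Pi.sub_apply]
    ring
  · refine ((hd 4).add ((((hd 3).const_mul 2).sub_const (1 / α)).mul
      ((hd 0).const_mul α).neg.exp)).congr_fderiv ?_
    ext v
    simp only [dc, ContinuousLinearMap.proj_apply, add_apply, sub_apply, neg_apply, smul_apply,
      smul_eq_mul, Pi.neg_apply]
    ring
  · refine ((hd 2).exp.mul ((hd 1).add_const (1 / α))).congr_fderiv ?_
    ext v
    simp only [dc, ContinuousLinearMap.proj_apply, add_apply, smul_apply, smul_eq_mul]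
    ring
  · refine ((hd 2).neg.exp.mul (hd 3)).congr_fderiv ?_
    ext v
    simp only [dc, ContinuousLinearMap.proj_apply, add_apply, sub_apply, neg_apply, smul_apply,
      smul_eq_mul, Pi.neg_apply]
    ring
  · have hden : HasFDerivAt (fun x : Fin 5 → ℝ => 4 * exp (2 * x 2 - α * x 0) * (x 1 + α))
        ((4 * exp (2 * a 2 - α * a 0)) • ((a 1 + α) • ((2 : ℝ) • dc 2 - α • dc 0) + dc 1)) a := by
      refine (((((hd 2).const_mul 2).sub ((hd 0).const_mul α)).exp.const_mul 4).mul
        ((hd 1).add_const α)).congr_fderiv ?_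
      ext v
      simp only [dc, ContinuousLinearMap.proj_apply, add_apply, sub_apply, smul_apply, smul_eq_mul,
        Pi.sub_apply]
      ring
    have hne : 4 * exp (2 * a 2 - α * a 0) * (a 1 + α) ≠ 0 := by positivity
    simp only [one_div]
    refine ((hasDerivAt_inv hne).comp_hasFDerivAt a hden).congr_fderiv ?_
    ext v
    simp only [dc, ContinuousLinearMap.proj_apply, add_apply, sub_apply, smul_apply, smul_eq_mul]
    field_simp
    ring

/-- Along `Φ`, the bracket `Q Z² - Z / X + 1 / (4 Q X²) = (√Q Z - 1 / (2 √Q X))²` equals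
`exp (α x) (1 - α²)² / (4 α² (y + α))`, so the factor `1 / (α² - 1)` cancels. -/
theorem F_Φ {α : ℝ} (hα0 : α ≠ 0) (hα1 : α ^ 2 ≠ 1) {a : Fin 5 → ℝ} (ha : a 1 + α ≠ 0) :
    F α (Φ α a) = exp (α * a 0) * (α * a 1 ^ 2 + 2 * a 1 + α) / (4 * α * (a 1 + α)) := by
  simp only [F, Φ, Fin.isValue, Matrix.cons_val, two_mul, exp_sub, exp_add]
  field_simp
  ring

def rollingToMongeMatrix (α : ℝ) (a : Fin 5 → ℝ) : Matrix (Fin 3) (Fin 3) ℝ :=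
  !![-(exp (α * a 0))⁻¹, (exp (α * a 0))⁻¹, 0;
    -α / (2 * exp (a 2) * (a 1 + α)), α / (2 * exp (a 2) * (a 1 + α)),
      -1 / (2 * exp (a 2) * (a 1 + α));
    exp (a 2) * α * (1 - a 1 ^ 2) / (2 * (a 1 + α)),
      exp (a 2) * (α * a 1 ^ 2 + 2 * a 1 + α) / (2 * (a 1 + α)),
      exp (a 2) * (1 - a 1 ^ 2) / (2 * (a 1 + α))]

theorem det_rollingToMongeMatrix {α : ℝ} {a : Fin 5 → ℝ} (ha : a 1 + α ≠ 0) :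
    (rollingToMongeMatrix α a).det = -1 / (2 * exp (α * a 0) * (a 1 + α)) := by
  rw [rollingToMongeMatrix, Matrix.det_fin_three]
  simp only [Matrix.of_apply, Matrix.cons_val, Matrix.cons_val_zero, Matrix.cons_val_one]
  field_simp
  ring

open scoped Matrix in
theorem monge_pullback_eq_mulVec {α : ℝ} (hα0 : α ≠ 0) (hα1 : α ^ 2 ≠ 1) {a : Fin 5 → ℝ}
    (ha : a 1 + α ≠ 0) (v : Fin 5 → ℝ) :
    ![ω₁ (Φ α a) (fderiv ℝ (Φ α) a v), ω₂ (Φ α a) (fderiv ℝ (Φ α) a v),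
        ω₃ α (Φ α a) (fderiv ℝ (Φ α) a v)] =
      rollingToMongeMatrix α a *ᵥ ![θ₁ α a v, θ₂ a v, θ₃ α a v] := by
  simp only [ω₁, ω₂, ω₃, F_Φ hα0 hα1 ha, (hasFDerivAt_Φ ha).fderiv]
  ext i
  fin_cases i <;>
    simp only [θ₁, θ₂, θ₃, rollingToMongeMatrix, Φ, dc, Fin.reduceFinMk, Matrix.cons_val,
      Matrix.mulVec, dotProduct, Fin.sum_univ_three, Matrix.of_apply, ContinuousLinearMap.coe_pi',
      ContinuousLinearMap.proj_apply, add_apply, sub_apply, smul_apply, smul_eq_mul, exp_sub,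
      exp_add, exp_neg, two_mul] <;>
    field_simp <;>
    ring

theorem rolling_to_monge_normal_form (α : ℝ) (hα0 : α ≠ 0) (hα1 : α^2 ≠ 1) :
    ∀ a : Fin 5 → ℝ, a 1 + α ≠ 0 → ∀ v : Fin 5 → ℝ,
      (θ₁ α a v = 0 ∧ θ₂ a v = 0 ∧ θ₃ α a v = 0) ↔
      (ω₁ (Φ α a) (fderiv ℝ (Φ α) a v) = 0 ∧
       ω₂ (Φ α a) (fderiv ℝ (Φ α) a v) = 0 ∧
       ω₃ α (Φ α a) (fderiv ℝ (Φ α) a v) = 0) := by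
  intro a ha v
  have hdet : (rollingToMongeMatrix α a).det ≠ 0 := by
    rw [det_rollingToMongeMatrix ha]
    exact div_ne_zero (by norm_num) (by positivity)
  have key := Matrix.mulVec_eq_zero_iff_of_det_ne_zero hdet (x := ![θ₁ α a v, θ₂ a v, θ₃ α a v])
  rw [← monge_pullback_eq_mulVec hα0 hα1 ha v] at key
  simpa only [Matrix.cons_eq_zero_iff, Matrix.zero_empty, and_true] using key.symm

end
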